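/- arXiv:2402.09963 — 4 statements merged into one kernel-verified Lean document; each statement's English description precedes it below -/
import Mathlib

section
/- Let n ≥ 1, let f, f′ : {−1,1}^n → ℝ with ‖f‖₂ > 0 and as_n(f) > 0, and let α > 1. Then √(E_x[(f(x) − f′(x))²]) ≥ √( ((1 − 1/α)·as_n(f)) / (n − as_n(f)/(α·‖f‖₂²)) ) − ‖f‖₂·√( α·as_n(f′)/as_n(f) ), where the expectation is over uniform x ∈ {−1,1}^n. (Note the denominator is positive, since as_n(f) ≤ n·‖f‖₂².) -/
open scoped BigOperators

noncomputable section

namespace SensTF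

/-- Flip the `i`-th bit of `x`. -/
def flip {n : ℕ} (x : Fin n → Bool) (i : Fin n) : Fin n → Bool :=
  Function.update x i (!(x i))

/-- Sensitivity `s(f,x) = (1/4) ∑_i |f(x) - f(x^{⊕i})|²`. -/
def sens {n : ℕ} (f : (Fin n → Bool) → ℝ) (x : Fin n → Bool) : ℝ :=
  (1 / 4) * ∑ i : Fin n, |f x - f (flip x i)| ^ 2

/-- Average sensitivity `as_n(f) = 2^{-n} ∑_x s(f,x)`. -/
def avgSens (n : ℕ) (f : (Fin n → Bool) → ℝ) : ℝ :=
  (1 / 2 ^ n) * ∑ x : Fin n → Bool, sens f x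

/-- `‖g‖₂ = √(2^{-n} ∑_x g(x)²)`. -/
def l2norm (n : ℕ) (g : (Fin n → Bool) → ℝ) : ℝ :=
  Real.sqrt ((1 / 2 ^ n) * ∑ x : Fin n → Bool, g x ^ 2)

end SensTF

open SensTF

namespace SensTFAux

lemma flip_flip {n : ℕ} (x : Fin n → Bool) (i : Fin n) :
    SensTF.flip (SensTF.flip x i) i = x := by
  simp [SensTF.flip, Function.update_idem]

lemma sum_sq_flip {n : ℕ} (g : (Fin n → Bool) → ℝ) (i : Fin n) :
    ∑ x : Fin n → Bool, g (SensTF.flip x i) ^ 2 = ∑ x : Fin n → Bool, g x ^ 2 :=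
  Fintype.sum_bijective (fun x => SensTF.flip x i)
    (Function.Involutive.bijective (fun x => flip_flip x i)) _ _ (fun _ => rfl)

lemma avgSens_nonneg (n : ℕ) (g : (Fin n → Bool) → ℝ) : 0 ≤ avgSens n g := by
  unfold avgSens sens
  positivity

lemma avgSens_le (n : ℕ) (g : (Fin n → Bool) → ℝ) :
    avgSens n g ≤ n * ((1 / 2 ^ n) * ∑ x : Fin n → Bool, g x ^ 2) := by
  have h1 : ∑ x : Fin n → Bool, sens g x ≤ n * ∑ x : Fin n → Bool, g x ^ 2 := by
    calc ∑ x : Fin n → Bool, sens g x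
        ≤ ∑ x : Fin n → Bool, ∑ i : Fin n,
            ((1/2) * g x ^ 2 + (1/2) * g (SensTF.flip x i) ^ 2) := by
          refine Finset.sum_le_sum fun x _ => ?_
          rw [sens, Finset.mul_sum]
          refine Finset.sum_le_sum fun i _ => ?_
          rw [sq_abs]
          nlinarith [sq_nonneg (g x + g (SensTF.flip x i))]
      _ = ∑ i : Fin n, ∑ x : Fin n → Bool,
            ((1/2) * g x ^ 2 + (1/2) * g (SensTF.flip x i) ^ 2) := Finset.sum_comm
      _ = ∑ i : Fin n, ∑ x : Fin n → Bool, g x ^ 2 := by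
          refine Finset.sum_congr rfl fun i _ => ?_
          rw [Finset.sum_add_distrib, ← Finset.mul_sum, ← Finset.mul_sum, sum_sq_flip]
          ring
      _ = n * ∑ x : Fin n → Bool, g x ^ 2 := by
          simp [Finset.sum_const]
  rw [avgSens]
  calc (1 / 2 ^ n : ℝ) * ∑ x : Fin n → Bool, sens g x
      ≤ (1 / 2 ^ n : ℝ) * (n * ∑ x : Fin n → Bool, g x ^ 2) := by
        apply mul_le_mul_of_nonneg_left h1 (by positivity)
    _ = n * ((1 / 2 ^ n) * ∑ x : Fin n → Bool, g x ^ 2) := by ring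

lemma avgSens_repr (n : ℕ) (w : (Fin n → Bool) → ℝ) :
    avgSens n w = ((1 : ℝ) / 2 ^ n * (1 / 4)) *
      ∑ p : (Fin n → Bool) × Fin n, (w p.1 - w (SensTF.flip p.1 p.2)) ^ 2 := by
  rw [avgSens, Fintype.sum_prod_type]
  simp only [sens, sq_abs, Finset.mul_sum]
  exact Finset.sum_congr rfl fun x _ => Finset.sum_congr rfl fun i _ => by ring

set_option maxHeartbeats 1000000 in
lemma sqrt_sum_add_sq_le {ι : Type*} [Fintype ι] (a b : ι → ℝ) :
    Real.sqrt (∑ p : ι, (a p + b p) ^ 2) ≤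
      Real.sqrt (∑ p : ι, a p ^ 2) + Real.sqrt (∑ p : ι, b p ^ 2) := by
  have h := Real.sum_mul_le_sqrt_mul_sqrt Finset.univ a b
  have ha : Real.sqrt (∑ p : ι, a p ^ 2) ^ 2 = ∑ p : ι, a p ^ 2 :=
    Real.sq_sqrt (by positivity)
  have hb : Real.sqrt (∑ p : ι, b p ^ 2) ^ 2 = ∑ p : ι, b p ^ 2 :=
    Real.sq_sqrt (by positivity)
  have hexp : ∑ p : ι, (a p + b p) ^ 2
      = ∑ p : ι, a p ^ 2 + 2 * ∑ p : ι, a p * b p + ∑ p : ι, b p ^ 2 := by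
    rw [Finset.mul_sum, ← Finset.sum_add_distrib, ← Finset.sum_add_distrib]
    exact Finset.sum_congr rfl fun p _ => by ring
  calc Real.sqrt (∑ p : ι, (a p + b p) ^ 2)
      ≤ Real.sqrt ((Real.sqrt (∑ p : ι, a p ^ 2) + Real.sqrt (∑ p : ι, b p ^ 2)) ^ 2) :=
        Real.sqrt_le_sqrt (by nlinarith)
    _ = _ := Real.sqrt_sq (by positivity)

lemma sqrt_avgSens_add (n : ℕ) (u v : (Fin n → Bool) → ℝ) :
    Real.sqrt (avgSens n (fun x => u x + v x)) ≤
      Real.sqrt (avgSens n u) + Real.sqrt (avgSens n v) := by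
  have hc0 : (0:ℝ) ≤ 1 / 2 ^ n * (1 / 4) := by positivity
  have hab : avgSens n (fun x => u x + v x) = ((1 : ℝ) / 2 ^ n * (1 / 4)) *
      ∑ p : (Fin n → Bool) × Fin n,
        ((u p.1 - u (SensTF.flip p.1 p.2)) + (v p.1 - v (SensTF.flip p.1 p.2))) ^ 2 := by
    rw [avgSens_repr]
    refine congrArg (((1 : ℝ) / 2 ^ n * (1 / 4)) * ·) ?_
    refine Finset.sum_congr rfl fun p _ => ?_
    show ((u p.1 + v p.1) - (u (SensTF.flip p.1 p.2) + v (SensTF.flip p.1 p.2))) ^ 2 = _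
    ring
  rw [hab, avgSens_repr n u, avgSens_repr n v,
    Real.sqrt_mul hc0, Real.sqrt_mul hc0, Real.sqrt_mul hc0, ← mul_add]
  refine mul_le_mul_of_nonneg_left (sqrt_sum_add_sq_le _ _) (Real.sqrt_nonneg _)

end SensTFAux

open SensTFAux

/-- Lemma: RMSE lower bound from average sensitivities, general `α`.
For any `f, f' : {±1}ⁿ → ℝ` with `‖f‖₂ > 0` and `as_n(f) > 0`, and any `α > 1`:
`√(E[(f−f')²]) ≥ √(((1−1/α)·as_n(f))/(n − as_n(f)/(α‖f‖₂²))) − ‖f‖₂·√(α·as_n(f')/as_n(f))`. -/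
theorem statement6 (n : ℕ) (hn : 1 ≤ n) (f f' : (Fin n → Bool) → ℝ)
    (hf : 0 < l2norm n f) (has : 0 < avgSens n f) (α : ℝ) (hα : 1 < α) :
    Real.sqrt ((1 / 2 ^ n) * ∑ x : Fin n → Bool, (f x - f' x) ^ 2) ≥
      Real.sqrt ((1 - 1 / α) * avgSens n f /
          (n - avgSens n f / (α * l2norm n f ^ 2))) -
        l2norm n f * Real.sqrt (α * avgSens n f' / avgSens n f) := by
  have hαpos : (0:ℝ) < α := by linarith
  have hn' : (1:ℝ) ≤ n := by exact_mod_cast hn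
  have hnpos : (0:ℝ) < n := by linarith
  have hF2 : l2norm n f ^ 2 = (1 / 2 ^ n) * ∑ x : Fin n → Bool, f x ^ 2 := by
    rw [SensTF.l2norm]
    exact Real.sq_sqrt (by positivity)
  have hfle : avgSens n f ≤ n * l2norm n f ^ 2 := by
    rw [hF2]; exact avgSens_le n f
  set F := l2norm n f with hFdef
  set a := avgSens n f with hadef
  set a' := avgSens n f' with ha'def
  set S : ℝ := (1 / 2 ^ n) * ∑ x : Fin n → Bool, (f x - f' x) ^ 2 with hSdef
  have hS0 : (0:ℝ) ≤ S := by rw [hSdef]; positivity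
  have ha'0 : 0 ≤ a' := by rw [ha'def]; exact avgSens_nonneg n f'
  set asg : ℝ := avgSens n (fun x => f x - f' x) with hasgdef
  have hasg0 : 0 ≤ asg := by rw [hasgdef]; exact avgSens_nonneg n _
  have hgle : asg ≤ n * S := by
    rw [hasgdef, hSdef]; exact avgSens_le n _
  have htri : Real.sqrt a ≤ Real.sqrt asg + Real.sqrt a' := by
    have h := sqrt_avgSens_add n (fun x => f x - f' x) f'
    have heq : avgSens n (fun x => (fun x => f x - f' x) x + f' x) = a := by
      rw [hadef]
      congr 1
      funext x
      beta_reduce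
      ring
    rw [heq, ← hasgdef, ← ha'def] at h
    exact h
  have hF2pos : (0:ℝ) < F ^ 2 := pow_pos hf 2
  clear_value F a a' S asg
  -- step (iv): √(asg/n) ≤ √S
  have h4 : Real.sqrt (asg / n) ≤ Real.sqrt S := by
    apply Real.sqrt_le_sqrt
    rw [div_le_iff₀ hnpos]
    linarith
  -- step (iii): √(a/n) - √(a'/n) ≤ √(asg/n)
  have h3 : Real.sqrt (a / n) - Real.sqrt (a' / n) ≤ Real.sqrt (asg / n) := by
    rw [Real.sqrt_div has.le, Real.sqrt_div ha'0, Real.sqrt_div hasg0, ← sub_div]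
    have hsn : (0:ℝ) < Real.sqrt n := Real.sqrt_pos.2 hnpos
    rw [div_le_div_iff₀ hsn hsn]
    nlinarith [htri, hsn]
  -- step (i)
  have hkey : a / (α * F ^ 2) ≤ n / α := by
    rw [div_le_div_iff₀ (by positivity) hαpos]
    nlinarith
  have hD : (0:ℝ) < n - a / (α * F ^ 2) := by
    have h2 : (n:ℝ) / α < n := by
      rw [div_lt_iff₀ hαpos]; nlinarith
    linarith
  have h1 : (1 - 1/α) * a / (n - a / (α * F ^ 2)) ≤ a / n := by
    rw [div_le_div_iff₀ hD hnpos]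
    have hprod : 0 ≤ a * (n / α - a / (α * F ^ 2)) :=
      mul_nonneg has.le (sub_nonneg.2 hkey)
    have hexpand : a * ((n:ℝ) - a / (α * F ^ 2)) - (1 - 1/α) * a * n
        = a * ((n:ℝ) / α - a / (α * F ^ 2)) := by ring
    linarith
  have hA : Real.sqrt ((1 - 1/α) * a / (n - a / (α * F ^ 2))) ≤ Real.sqrt (a / n) :=
    Real.sqrt_le_sqrt h1
  -- step (ii)
  have hB : Real.sqrt (a' / n) ≤ F * Real.sqrt (α * a' / a) := by
    rw [show F * Real.sqrt (α * a' / a) = Real.sqrt (F ^ 2 * (α * a' / a)) by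
      rw [Real.sqrt_mul (le_of_lt hF2pos), Real.sqrt_sq hf.le]]
    apply Real.sqrt_le_sqrt
    rw [mul_div_assoc', div_le_div_iff₀ hnpos has]
    have hint1 : a' * a ≤ a' * (n * F ^ 2) :=
      mul_le_mul_of_nonneg_left hfle ha'0
    have hint2 : 0 ≤ (α - 1) * (a' * (n * F ^ 2)) :=
      mul_nonneg (by linarith) (mul_nonneg ha'0 (by positivity))
    nlinarith
  linarith [hA, hB, h3, h4]
end
end

section
/- Let n ≥ 1 and let f, f′ : {−1,1}^n → ℝ with ‖f‖₂ > 0 and as_n(f) > 0. Then √(E_x[(f(x) − f′(x))²]) ≥ √( as_n(f) / (2n − as_n(f)/‖f‖₂²) ) − ‖f‖₂·√( 2·as_n(f′)/as_n(f) ), where the expectation is over uniform x ∈ {−1,1}^n. -/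
open scoped BigOperators

noncomputable section

open SensTF

/-!
`√as_n` is, up to the factor `√(2⁻ⁿ/4)`, the Euclidean norm of the vector of edge differences
`f x - f (x ⊕ i)`, hence a seminorm; and since `(a - b)² ≤ 2a² + 2b²` and each `x` lies on `n`
edges, `as_n(g) ≤ n ‖g‖₂²`. Applied to `g = f - f'` this gives
`√as_n(f) - √as_n(f') ≤ √n ‖f - f'‖₂`. It remains to note that `2n - as_n(f)/‖f‖₂² ≥ n`
and `1/n ≤ 2‖f‖₂²/as_n(f)`, both again from `as_n(f) ≤ n ‖f‖₂²` (which also forces `n > 0`).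
-/

namespace SensTF

variable {n : ℕ}

theorem flip_involutive (i : Fin n) : Function.Involutive (flip · i) := fun x => by
  simp [flip]

theorem sum_comp_flip (i : Fin n) (F : (Fin n → Bool) → ℝ) :
    ∑ x, F (flip x i) = ∑ x, F x :=
  Equiv.sum_comp ((flip_involutive i).toPerm _) F

-- Viewed as a Euclidean vector, so that `√as_n`, a multiple of its norm, is a seminorm in `f`.
def edgeDiff (f : (Fin n → Bool) → ℝ) : EuclideanSpace ℝ ((Fin n → Bool) × Fin n) :=
  WithLp.toLp 2 fun p => f p.1 - f (flip p.1 p.2)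

theorem edgeDiff_sub (f g : (Fin n → Bool) → ℝ) : edgeDiff (f - g) = edgeDiff f - edgeDiff g := by
  rw [edgeDiff, edgeDiff, edgeDiff, ← WithLp.toLp_sub]
  congr 1
  funext p
  simp only [Pi.sub_apply]
  ring

theorem avgSens_eq_norm_sq (f : (Fin n → Bool) → ℝ) :
    avgSens n f = 1 / 2 ^ n / 4 * ‖edgeDiff f‖ ^ 2 := by
  simp only [avgSens, sens, EuclideanSpace.norm_sq_eq, edgeDiff, Real.norm_eq_abs,
    Fintype.sum_prod_type, Finset.mul_sum]
  exact Finset.sum_congr rfl fun _ _ => Finset.sum_congr rfl fun _ _ => by ring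

theorem sqrt_avgSens (f : (Fin n → Bool) → ℝ) :
    √(avgSens n f) = √(1 / 2 ^ n / 4) * ‖edgeDiff f‖ := by
  rw [avgSens_eq_norm_sq, Real.sqrt_mul (by positivity), Real.sqrt_sq (norm_nonneg _)]

theorem avgSens_nonneg (f : (Fin n → Bool) → ℝ) : 0 ≤ avgSens n f := by
  rw [avgSens_eq_norm_sq]
  positivity

theorem sqrt_avgSens_sub_le (f g : (Fin n → Bool) → ℝ) :
    √(avgSens n f) - √(avgSens n g) ≤ √(avgSens n (f - g)) := by
  rw [sqrt_avgSens, sqrt_avgSens, sqrt_avgSens, edgeDiff_sub, ← mul_sub]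
  exact mul_le_mul_of_nonneg_left (norm_sub_norm_le _ _) (Real.sqrt_nonneg _)

theorem sum_sq_sub_comp_flip_le (f : (Fin n → Bool) → ℝ) (i : Fin n) :
    ∑ x, (f x - f (flip x i)) ^ 2 ≤ 4 * ∑ x, f x ^ 2 :=
  calc ∑ x, (f x - f (flip x i)) ^ 2 ≤ ∑ x, (2 * f x ^ 2 + 2 * f (flip x i) ^ 2) :=
        Finset.sum_le_sum fun x _ => by nlinarith [sq_nonneg (f x + f (flip x i))]
    _ = 4 * ∑ x, f x ^ 2 := by
        rw [Finset.sum_add_distrib, ← Finset.mul_sum, ← Finset.mul_sum,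
          sum_comp_flip i fun x => f x ^ 2]
        ring

theorem l2norm_nonneg (f : (Fin n → Bool) → ℝ) : 0 ≤ l2norm n f :=
  Real.sqrt_nonneg _

theorem l2norm_sq (f : (Fin n → Bool) → ℝ) :
    l2norm n f ^ 2 = 1 / 2 ^ n * ∑ x, f x ^ 2 :=
  Real.sq_sqrt (by positivity)

theorem avgSens_le_mul_l2norm_sq (f : (Fin n → Bool) → ℝ) :
    avgSens n f ≤ n * l2norm n f ^ 2 := by
  have hsum : ∑ x, sens f x = 1 / 4 * ∑ i, ∑ x, (f x - f (flip x i)) ^ 2 := by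
    simp only [sens, sq_abs, ← Finset.mul_sum]
    rw [Finset.sum_comm]
  have hle : ∑ i : Fin n, ∑ x, (f x - f (flip x i)) ^ 2 ≤ ∑ _i : Fin n, 4 * ∑ x, f x ^ 2 :=
    Finset.sum_le_sum fun i _ => sum_sq_sub_comp_flip_le f i
  rw [Finset.sum_const, Finset.card_univ, Fintype.card_fin, nsmul_eq_mul] at hle
  rw [avgSens, hsum, l2norm_sq]
  have : (0 : ℝ) ≤ 1 / 2 ^ n := by positivity
  nlinarith

theorem sqrt_avgSens_le (f : (Fin n → Bool) → ℝ) :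
    √(avgSens n f) ≤ √n * l2norm n f := by
  calc √(avgSens n f) ≤ √(n * l2norm n f ^ 2) := Real.sqrt_le_sqrt (avgSens_le_mul_l2norm_sq f)
    _ = √n * l2norm n f := by
        rw [Real.sqrt_mul n.cast_nonneg, Real.sqrt_sq (l2norm_nonneg f)]

end SensTF

theorem Real.sqrt_div_two_mul_sub_div_le {a n l : ℝ} (ha : 0 ≤ a) (hn : 0 < n)
    (hal : a ≤ n * l ^ 2) : √(a / (2 * n - a / l ^ 2)) ≤ √a / √n := by
  rw [← Real.sqrt_div ha]
  refine Real.sqrt_le_sqrt (div_le_div_of_nonneg_left ha hn ?_)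
  linarith [div_le_of_le_mul₀ (sq_nonneg l) hn.le hal]

theorem Real.sqrt_div_le_mul_sqrt_div {a b n l : ℝ} (ha : 0 < a) (hb : 0 ≤ b) (hn : 0 < n)
    (hl : 0 ≤ l) (hal : a ≤ 2 * n * l ^ 2) : √b / √n ≤ l * √(2 * b / a) := by
  rw [← Real.sqrt_div hb, ← Real.sqrt_sq hl, ← Real.sqrt_mul (sq_nonneg l)]
  refine Real.sqrt_le_sqrt ?_
  rw [div_le_iff₀ hn, mul_div_assoc', div_mul_eq_mul_div, le_div_iff₀ ha]
  nlinarith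

theorem statement7_general (n : ℕ) (f f' : (Fin n → Bool) → ℝ)
    (has : 0 < avgSens n f) :
    Real.sqrt ((1 / 2 ^ n) * ∑ x : Fin n → Bool, (f x - f' x) ^ 2) ≥
      Real.sqrt (avgSens n f / (2 * n - avgSens n f / l2norm n f ^ 2)) -
        l2norm n f * Real.sqrt (2 * avgSens n f' / avgSens n f) := by
  set A := avgSens n f
  set B := avgSens n f'
  set L := l2norm n f
  have hAL : A ≤ n * L ^ 2 := avgSens_le_mul_l2norm_sq f
  have hn : (0 : ℝ) < n := pos_of_mul_pos_left (has.trans_le hAL) (sq_nonneg L)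
  have hdiff : √A - √B ≤ √n * l2norm n (f - f') :=
    (sqrt_avgSens_sub_le f f').trans (sqrt_avgSens_le _)
  calc √(A / (2 * n - A / L ^ 2)) - L * √(2 * B / A) ≤ √A / √n - √B / √n :=
        sub_le_sub (Real.sqrt_div_two_mul_sub_div_le has.le hn hAL)
          (Real.sqrt_div_le_mul_sqrt_div has (avgSens_nonneg f') hn (l2norm_nonneg f)
            (by nlinarith [sq_nonneg L]))
    _ = (√A - √B) / √n := sub_div _ _ _ |>.symm
    _ ≤ l2norm n (f - f') := div_le_of_le_mul₀ (Real.sqrt_nonneg _) (Real.sqrt_nonneg _)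
        (by linarith)

/-- Lemma: RMSE lower bound from average sensitivities, `α = 2`.
For any `f, f' : {±1}ⁿ → ℝ` with `‖f‖₂ > 0` and `as_n(f) > 0`:
`√(E[(f−f')²]) ≥ √(as_n(f)/(2n − as_n(f)/‖f‖₂²)) − ‖f‖₂·√(2·as_n(f')/as_n(f))`. -/
theorem statement7 (n : ℕ) (hn : 1 ≤ n) (f f' : (Fin n → Bool) → ℝ)
    (hf : 0 < l2norm n f) (has : 0 < avgSens n f) :
    Real.sqrt ((1 / 2 ^ n) * ∑ x : Fin n → Bool, (f x - f' x) ^ 2) ≥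
      Real.sqrt (avgSens n f / (2 * n - avgSens n f / l2norm n f ^ 2)) -
        l2norm n f * Real.sqrt (2 * avgSens n f' / avgSens n f) :=
  statement7_general n f f' has
end
end

section
/- Let ε ≥ 0, let ŷ : {−1,1}^n → ℝ^d, define LayerNorm(y) = (y − mean(y))/√(σ²(y)+ε) for y ∈ ℝ^d (where mean(y) is the average of the coordinates of y, subtracted coordinatewise, and σ²(y) is their variance), and set N(z) = √(σ²(ŷ(z))+ε). Let C > 1 be such that ‖ŷ(z)‖₂ ≤ C for all z ∈ {−1,1}^n, and fix x ∈ {−1,1}^n and i ∈ {1,…,n} with N(x) > 0 and N(x^{⊕i}) > 0. Then ‖LayerNorm(ŷ(x)) − LayerNorm(ŷ(x^{⊕i}))‖₂ ≤ 2·C·‖ŷ(x) − ŷ(x^{⊕i})‖₂·(1 + 1/N(x))·(1 + 1/N(x^{⊕i})). -/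
/-!
Write `LayerNorm(y) = c(y) / N(y)`, where `c` is the centering map `y ↦ y - mean(y)` and
`N(y) = √(σ²(y) + ε)`. Then
`LayerNorm(u) - LayerNorm(v) = c(u - v) / N(u) + (1 / N(u) - 1 / N(v)) • c(v)`.
The centering map is an orthogonal projection, so `‖c(w)‖ ≤ ‖w‖`; since `σ(y) = ‖c(y)‖ / √d` and
`t ↦ √(t² + ε)` is 1-Lipschitz, also `|N(u) - N(v)| ≤ ‖u - v‖`. Hence the difference is at most
`‖u - v‖ (1 / N(u) + ‖v‖ / (N(u) N(v)))`, which `‖v‖ ≤ C` and `C > 1` bound by the claimed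
expression.
-/

open scoped BigOperators

noncomputable section

namespace SensTF

/-- Euclidean norm of a vector in `ℝ^d`. -/
def enorm {d : ℕ} (v : Fin d → ℝ) : ℝ := Real.sqrt (∑ j : Fin d, (v j) ^ 2)

/-- Mean of the coordinates. -/
def vmean {d : ℕ} (v : Fin d → ℝ) : ℝ := (∑ j : Fin d, v j) / d

/-- Variance of the coordinates. -/
def vvar {d : ℕ} (v : Fin d → ℝ) : ℝ := (∑ j : Fin d, (v j - vmean v) ^ 2) / d

/-- Layer norm with stabilizer `ε`. -/
def layerNorm {d : ℕ} (eps : ℝ) (v : Fin d → ℝ) : Fin d → ℝ :=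
  fun j => (v j - vmean v) / Real.sqrt (vvar v + eps)

end SensTF

open SensTF

theorem Real.abs_sqrt_add_sub_sqrt_add_le {a b ε : ℝ} (ha : 0 ≤ a) (hb : 0 ≤ b) (hε : 0 ≤ ε) :
    |√(a + ε) - √(b + ε)| ≤ |√a - √b| := by
  -- Cauchy–Schwarz for the vectors `(√a, √ε)` and `(√b, √ε)`.
  have hpq : √a * √b + ε ≤ √(a + ε) * √(b + ε) := by
    rw [← Real.sqrt_mul (show 0 ≤ a + ε by positivity)]
    apply Real.le_sqrt_of_sq_le
    nlinarith [Real.sq_sqrt ha, Real.sq_sqrt hb, sq_nonneg (√a - √b), Real.sqrt_nonneg a,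
      Real.sqrt_nonneg b]
  rw [← sq_le_sq, sub_sq, sub_sq, Real.sq_sqrt ha, Real.sq_sqrt hb, Real.sq_sqrt (by positivity),
    Real.sq_sqrt (by positivity)]
  linarith

namespace SensTF

variable {d : ℕ}

def center (v : Fin d → ℝ) : Fin d → ℝ := fun j => v j - vmean v

theorem enorm_eq_norm_toLp (v : Fin d → ℝ) : enorm v = ‖WithLp.toLp 2 v‖ := by
  simp [enorm, EuclideanSpace.norm_eq, sq_abs]

theorem enorm_nonneg (v : Fin d → ℝ) : 0 ≤ enorm v := Real.sqrt_nonneg _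

theorem enorm_add_le (u v : Fin d → ℝ) : enorm (u + v) ≤ enorm u + enorm v := by
  simpa only [enorm_eq_norm_toLp, WithLp.toLp_add] using norm_add_le _ _

theorem enorm_smul (c : ℝ) (v : Fin d → ℝ) : enorm (c • v) = |c| * enorm v := by
  rw [enorm_eq_norm_toLp, enorm_eq_norm_toLp, WithLp.toLp_smul, norm_smul, Real.norm_eq_abs]

theorem abs_enorm_sub_enorm_le (u v : Fin d → ℝ) : |enorm u - enorm v| ≤ enorm (u - v) := by
  simpa only [enorm_eq_norm_toLp, WithLp.toLp_sub] using abs_norm_sub_norm_le _ _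

theorem vmean_sub (u v : Fin d → ℝ) : vmean (u - v) = vmean u - vmean v := by
  simp only [vmean, Pi.sub_apply, Finset.sum_sub_distrib, sub_div]

theorem center_sub (u v : Fin d → ℝ) : center (u - v) = center u - center v := by
  ext j
  simp only [center, vmean_sub, Pi.sub_apply]
  ring

theorem sum_sq_center (v : Fin d → ℝ) :
    ∑ j, center v j ^ 2 = ∑ j, v j ^ 2 - d * vmean v ^ 2 := by
  have hsum : ∑ j, v j = d * vmean v := by
    rcases Nat.eq_zero_or_pos d with rfl | hd
    · simp
    · rw [vmean, mul_div_cancel₀ _ (by positivity)]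
  simp only [center, sub_sq, Finset.sum_add_distrib, Finset.sum_sub_distrib, ← Finset.sum_mul,
    ← Finset.mul_sum, Finset.sum_const, Finset.card_univ, Fintype.card_fin, nsmul_eq_mul, hsum]
  ring

theorem enorm_center_le (v : Fin d → ℝ) : enorm (center v) ≤ enorm v := by
  apply Real.sqrt_le_sqrt
  rw [sum_sq_center]
  have : 0 ≤ (d : ℝ) * vmean v ^ 2 := by positivity
  linarith

theorem vvar_nonneg (v : Fin d → ℝ) : 0 ≤ vvar v := by
  unfold vvar; positivity

theorem sqrt_vvar (v : Fin d → ℝ) : √(vvar v) = enorm (center v) / √d := by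
  rw [vvar, Real.sqrt_div' _ (Nat.cast_nonneg d)]
  rfl

theorem abs_sqrt_vvar_sub_le (u v : Fin d → ℝ) :
    |√(vvar u) - √(vvar v)| ≤ enorm (u - v) := by
  rcases Nat.eq_zero_or_pos d with rfl | hd
  · simp [sqrt_vvar, enorm_nonneg]
  calc |√(vvar u) - √(vvar v)| = |enorm (center u) - enorm (center v)| / √d := by
        rw [sqrt_vvar, sqrt_vvar, ← sub_div, abs_div, abs_of_nonneg (Real.sqrt_nonneg _)]
    _ ≤ |enorm (center u) - enorm (center v)| :=
        div_le_self (abs_nonneg _) (Real.one_le_sqrt.mpr (mod_cast hd))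
    _ ≤ enorm (center u - center v) := abs_enorm_sub_enorm_le _ _
    _ ≤ enorm (u - v) := center_sub u v ▸ enorm_center_le _

theorem abs_sqrt_vvar_add_sub_le {eps : ℝ} (heps : 0 ≤ eps) (u v : Fin d → ℝ) :
    |√(vvar u + eps) - √(vvar v + eps)| ≤ enorm (u - v) :=
  (Real.abs_sqrt_add_sub_sqrt_add_le (vvar_nonneg u) (vvar_nonneg v) heps).trans
    (abs_sqrt_vvar_sub_le u v)

theorem layerNorm_eq_smul_center (eps : ℝ) (v : Fin d → ℝ) :
    layerNorm eps v = (1 / √(vvar v + eps)) • center v := by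
  ext j
  simp only [layerNorm, center, Pi.smul_apply, smul_eq_mul]
  ring

theorem enorm_layerNorm_sub_le {eps : ℝ} (heps : 0 ≤ eps) {u v : Fin d → ℝ}
    (hu : 0 < √(vvar u + eps)) (hv : 0 < √(vvar v + eps)) :
    enorm (layerNorm eps u - layerNorm eps v) ≤
      enorm (u - v) *
        (1 / √(vvar u + eps) + enorm v / (√(vvar u + eps) * √(vvar v + eps))) := by
  set Nu := √(vvar u + eps)
  set Nv := √(vvar v + eps)
  set D := enorm (u - v)
  have hdiff : layerNorm eps u - layerNorm eps v =
      (1 / Nu) • center (u - v) + (1 / Nu - 1 / Nv) • center v := by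
    rw [layerNorm_eq_smul_center, layerNorm_eq_smul_center, center_sub]
    module
  have hinv : |1 / Nu - 1 / Nv| ≤ D / (Nu * Nv) := by
    rw [div_sub_div _ _ hu.ne' hv.ne', one_mul, mul_one, abs_div, abs_sub_comm,
      abs_of_pos (mul_pos hu hv)]
    gcongr
    exact abs_sqrt_vvar_add_sub_le heps u v
  calc enorm (layerNorm eps u - layerNorm eps v)
      ≤ |1 / Nu| * enorm (center (u - v)) + |1 / Nu - 1 / Nv| * enorm (center v) := by
        rw [hdiff, ← enorm_smul, ← enorm_smul]
        exact enorm_add_le _ _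
    _ ≤ 1 / Nu * D + D / (Nu * Nv) * enorm v := by
        rw [abs_of_pos (by positivity)]
        have hD : 0 ≤ D := enorm_nonneg _
        gcongr
        exacts [enorm_center_le _, enorm_nonneg _, enorm_center_le _]
    _ = D * (1 / Nu + enorm v / (Nu * Nv)) := by ring

end SensTF

/-- Lemma: influence of layer norm.
With `N(z) = √(σ²(ŷ(z)) + ε)` and `‖ŷ(z)‖₂ ≤ C` (`C > 1`), if `N(x) > 0` and
`N(x^{⊕i}) > 0`, then
`‖LN(ŷ(x)) − LN(ŷ(x^{⊕i}))‖₂ ≤ 2C‖ŷ(x) − ŷ(x^{⊕i})‖₂ (1 + 1/N(x)) (1 + 1/N(x^{⊕i}))`. -/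
theorem statement13 {n d : ℕ} (eps : ℝ) (heps : 0 ≤ eps)
    (yhat : (Fin n → Bool) → Fin d → ℝ)
    (C : ℝ) (hC : 1 < C)
    (hbound : ∀ z : Fin n → Bool, SensTF.enorm (yhat z) ≤ C)
    (x : Fin n → Bool) (i : Fin n)
    (hNx : 0 < Real.sqrt (vvar (yhat x) + eps))
    (hNxi : 0 < Real.sqrt (vvar (yhat (flip x i)) + eps)) :
    SensTF.enorm (layerNorm eps (yhat x) - layerNorm eps (yhat (flip x i))) ≤
      2 * C * SensTF.enorm (yhat x - yhat (flip x i)) *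
        (1 + 1 / Real.sqrt (vvar (yhat x) + eps)) *
        (1 + 1 / Real.sqrt (vvar (yhat (flip x i)) + eps)) := by
  set N₁ := √(vvar (yhat x) + eps)
  set N₂ := √(vvar (yhat (flip x i)) + eps)
  set D := SensTF.enorm (yhat x - yhat (flip x i))
  have hscale : 1 / N₁ + C / (N₁ * N₂) ≤ 2 * C * (1 + 1 / N₁) * (1 + 1 / N₂) := by
    have h₁ : 0 < 1 / N₁ := by positivity
    have h₂ : 0 < 1 / N₂ := by positivity
    rw [show C / (N₁ * N₂) = C * (1 / N₁) * (1 / N₂) by ring]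
    nlinarith [mul_pos h₁ h₂]
  have hD : 0 ≤ D := enorm_nonneg _
  calc SensTF.enorm (layerNorm eps (yhat x) - layerNorm eps (yhat (flip x i)))
      ≤ D * (1 / N₁ + SensTF.enorm (yhat (flip x i)) / (N₁ * N₂)) :=
        enorm_layerNorm_sub_le heps hNx hNxi
    _ ≤ D * (1 / N₁ + C / (N₁ * N₂)) := by gcongr; exact hbound _
    _ ≤ D * (2 * C * (1 + 1 / N₁) * (1 + 1 / N₂)) := by gcongr
    _ = 2 * C * D * (1 + 1 / N₁) * (1 + 1 / N₂) := by ring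
end
end

section
/- There exists an absolute constant c > 0 such that for all integers D ≥ d ≥ 2 and all ρ > 0 the following holds: if Δ is uniformly distributed on the sphere {v ∈ ℝ^D : ‖v‖₂ = ρ}, and Δ′ ∈ ℝ^d denotes the restriction of Δ to a fixed set of d coordinates, then P( ‖Δ′ − mean(Δ′)·𝟙_d‖₂ ≤ (ρ/2)·√(d/D) ) ≤ exp(−c·d), where mean(Δ′) is the average of the d coordinates of Δ′ and 𝟙_d ∈ ℝ^d is the all-ones vector. -/
open scoped BigOperators
open MeasureTheory

noncomputable section

namespace SensTF

/-- The uniform probability measure on the unit sphere of a Euclidean space. -/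
def unifSphere (ι : Type) [Fintype ι] :
    Measure (Metric.sphere (0 : EuclideanSpace ℝ ι) 1) :=
  ((volume : Measure (EuclideanSpace ℝ ι)).toSphere Set.univ)⁻¹ •
    (volume : Measure (EuclideanSpace ℝ ι)).toSphere

end SensTF

open SensTF

/-!
The centred restriction `x ↦ (x (ι a) - mean)ₐ` has the same norm as the orthogonal projection
onto a `(d - 1)`-dimensional subspace `K` of `ℝ^D`, whose complement is spanned by the normalised
indicator of `range ι` and the coordinate vectors off `range ι`. The uniform measure of a set of
directions is the volume of the cone it spans in the unit ball, divided by the volume of the ball.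
Splitting `ℝ^D = K ⊕ Kᗮ` isometrically, the cone over `{v | ‖P_K v‖ ≤ ε}` lies in a product of
balls, so the probability is at most `ε^(d-1) V_(d-1) V_(D-d+1) / V_D`, with `V_n` the volume of
the unit `n`-ball. For `ε² = d / (4D)` this Gamma-function ratio shrinks by at least the factor
`e / 3` when `d` grows by `2`, and it is at most `√(1/2)` resp. `3/8` for `d = 2, 3`.
-/

open Metric Set Real Module Function
open scoped Pointwise

theorem Real.Gamma_add_half_le_sqrt_mul_Gamma {s : ℝ} (hs : 0 < s) :
    Gamma (s + 1 / 2) ≤ √s * Gamma s := by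
  have h := Gamma_mul_add_mul_le_rpow_Gamma_mul_rpow_Gamma hs (by linarith : 0 < s + 1)
    (by norm_num : (0 : ℝ) < 1 / 2) (by norm_num : (0 : ℝ) < 1 / 2) (by norm_num)
  rw [Gamma_add_one hs.ne', ← sqrt_eq_rpow, ← sqrt_eq_rpow, sqrt_mul hs.le,
    show 1 / 2 * s + 1 / 2 * (s + 1) = s + 1 / 2 by ring] at h
  calc Gamma (s + 1 / 2) ≤ √(Gamma s) * (√s * √(Gamma s)) := h
    _ = √s * Gamma s := by rw [mul_left_comm, mul_self_sqrt (Gamma_pos_of_pos hs).le]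

theorem sum_sub_mean_sq {α : Type*} [Fintype α] (y : α → ℝ) :
    ∑ i, (y i - (∑ j, y j) / Fintype.card α) ^ 2 =
      ∑ i, y i ^ 2 - (∑ i, y i) ^ 2 / Fintype.card α := by
  rcases isEmpty_or_nonempty α with h | h
  · simp
  have : (Fintype.card α : ℝ) ≠ 0 := by positivity
  simp only [sub_sq, Finset.sum_add_distrib, Finset.sum_sub_distrib, ← Finset.sum_mul,
    ← Finset.mul_sum, Finset.sum_const, Finset.card_univ, nsmul_eq_mul]
  field_simp
  ring

section InnerProductSpace

variable {E : Type*} [NormedAddCommGroup E] [InnerProductSpace ℝ E] [FiniteDimensional ℝ E]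

theorem Orthonormal.norm_sq_orthogonalProjectionOnto_span {ι : Type*} [Fintype ι] {v : ι → E}
    (hv : Orthonormal ℝ v) (x : E) :
    ‖(Submodule.span ℝ (range v)).orthogonalProjectionOnto x‖ ^ 2 =
      ∑ i, inner ℝ (v i) x ^ 2 := by
  let b : OrthonormalBasis ι ℝ (Submodule.span ℝ (range v)) :=
    OrthonormalBasis.mk (by convert! orthonormal_span hv; simp [Module.Basis.span_apply])
      (Module.Basis.span hv.linearIndependent).span_eq.ge
  have hb : ∀ i, (b i : E) = v i := fun i => by simp [b, Module.Basis.span_apply]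
  simp only [← b.sum_sq_inner_right, Submodule.inner_orthogonalProjectionOnto_eq_of_mem_left, hb]

variable [MeasurableSpace E] [BorelSpace E]

theorem Submodule.volume_setOf_norm_orthogonalProjectionOnto_le_and_norm_le
    (K : Submodule ℝ E) (ε r : ℝ) :
    volume {x : E | ‖K.orthogonalProjectionOnto x‖ ≤ ε ∧ ‖x‖ ≤ r} ≤
      volume (closedBall (0 : K) ε) * volume (closedBall (0 : Kᗮ) r) := by
  have hsplit : MeasurePreserving (fun x => WithLp.ofLp (K.orthogonalDecomposition x)) :=
    (WithLp.volume_preserving_ofLp K Kᗮ).comp K.orthogonalDecomposition.measurePreserving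
  calc volume {x : E | ‖K.orthogonalProjectionOnto x‖ ≤ ε ∧ ‖x‖ ≤ r}
      ≤ volume ((fun x => WithLp.ofLp (K.orthogonalDecomposition x)) ⁻¹'
          (closedBall 0 ε ×ˢ closedBall 0 r)) := by
        refine measure_mono fun x ⟨hK, hx⟩ => ?_
        simp only [Set.mem_preimage, orthogonalDecomposition_apply, Set.mem_prod,
          mem_closedBall_zero_iff]
        exact ⟨hK, (Kᗮ.norm_orthogonalProjectionOnto_apply_le x).trans hx⟩
    _ = volume (closedBall (0 : K) ε ×ˢ closedBall (0 : Kᗮ) r) :=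
        hsplit.measure_preimage
          (measurableSet_closedBall.prod measurableSet_closedBall).nullMeasurableSet
    _ = _ := by rw [Measure.volume_eq_prod, Measure.prod_prod]

theorem Submodule.volume_closedBall_mul_div_volume_ball (K : Submodule ℝ E) [Nontrivial K]
    [Nontrivial Kᗮ] {ε : ℝ} (hε : 0 ≤ ε) :
    volume (closedBall (0 : K) ε) * volume (closedBall (0 : Kᗮ) 1) / volume (ball (0 : E) 1) =
      ENNReal.ofReal (ε ^ finrank ℝ K * (Gamma (finrank ℝ E / 2 + 1) /
        (Gamma (finrank ℝ K / 2 + 1) * Gamma (finrank ℝ Kᗮ / 2 + 1)))) := by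
  have : Nontrivial E := by
    obtain ⟨x, hx⟩ := exists_ne (0 : K)
    exact ⟨⟨x, 0, by simpa using hx⟩⟩
  rw [InnerProductSpace.volume_closedBall, InnerProductSpace.volume_closedBall,
    InnerProductSpace.volume_ball]
  simp only [ENNReal.ofReal_one, one_pow, one_mul]
  rw [← ENNReal.ofReal_pow hε, ← ENNReal.ofReal_mul (by positivity),
    ← ENNReal.ofReal_mul (by positivity), ← ENNReal.ofReal_div_of_pos (by positivity)]
  congr 1
  rw [← K.finrank_add_finrank_orthogonal, pow_add]
  have := Gamma_pos_of_pos (by positivity : (0 : ℝ) < finrank ℝ K / 2 + 1)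
  have := Gamma_pos_of_pos (by positivity : (0 : ℝ) < finrank ℝ Kᗮ / 2 + 1)
  have := Gamma_pos_of_pos
    (by positivity : (0 : ℝ) < ((finrank ℝ K + finrank ℝ Kᗮ : ℕ) : ℝ) / 2 + 1)
  have : 0 < √π := by positivity
  field_simp

end InnerProductSpace

namespace SensTF

theorem unifSphere_apply {ι : Type} [Fintype ι] [Nonempty ι]
    {s : Set (sphere (0 : EuclideanSpace ℝ ι) 1)} (hs : MeasurableSet s) :
    unifSphere ι s =
      volume (Ioo (0 : ℝ) 1 • ((↑) '' s : Set (EuclideanSpace ℝ ι))) /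
        volume (ball (0 : EuclideanSpace ℝ ι) 1) := by
  have hdim : (finrank ℝ (EuclideanSpace ℝ ι) : ENNReal) ≠ 0 := by simp
  rw [unifSphere, Measure.smul_apply, smul_eq_mul, Measure.toSphere_apply' _ hs,
    Measure.toSphere_apply_univ, ← ENNReal.div_eq_inv_mul,
    ENNReal.mul_div_mul_left _ _ hdim (ENNReal.natCast_ne_top _)]

theorem unifSphere_setOf_norm_orthogonalProjectionOnto_le {ι : Type} [Fintype ι] [Nonempty ι]
    (K : Submodule ℝ (EuclideanSpace ℝ ι)) (ε : ℝ) :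
    unifSphere ι {v | ‖K.orthogonalProjectionOnto v‖ ≤ ε} ≤
      volume (closedBall (0 : K) ε) * volume (closedBall (0 : Kᗮ) 1) /
        volume (ball (0 : EuclideanSpace ℝ ι) 1) := by
  have hmeas : MeasurableSet {v : sphere (0 : EuclideanSpace ℝ ι) 1 |
      ‖K.orthogonalProjectionOnto v‖ ≤ ε} :=
    measurableSet_le (by fun_prop) measurable_const
  rw [unifSphere_apply hmeas]
  gcongr
  refine (measure_mono ?_).trans (K.volume_setOf_norm_orthogonalProjectionOnto_le_and_norm_le ε 1)
  rintro _ ⟨r, ⟨hr0, hr1⟩, _, ⟨v, hv, rfl⟩, rfl⟩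
  have hv1 : ‖(v : EuclideanSpace ℝ ι)‖ = 1 := by simp
  simp only [mem_ofPred_eq, map_smul, norm_smul, norm_of_nonneg hr0.le, hv1, mul_one] at hv ⊢
  exact ⟨by nlinarith [norm_nonneg (K.orthogonalProjectionOnto v)], hr1.le⟩

section CenteredSlice

variable {d D : ℕ} (ι : Fin d → Fin D)

def normalFrame : Option {j : Fin D // j ∉ range ι} → EuclideanSpace ℝ (Fin D)
  | none => (√d)⁻¹ • ∑ a, EuclideanSpace.single (ι a) 1
  | some j => EuclideanSpace.single j 1

/-- This is `{x | x j = 0 for j ∉ range ι, and ∑ a, x (ι a) = 0}`. -/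
def centeredSlice : Submodule ℝ (EuclideanSpace ℝ (Fin D)) :=
  (Submodule.span ℝ (range (normalFrame ι)))ᗮ

theorem inner_normalFrame_none (x : EuclideanSpace ℝ (Fin D)) :
    inner ℝ (normalFrame ι none) x = (∑ a, x (ι a)) / √d := by
  simp [normalFrame, real_inner_smul_left, sum_inner, EuclideanSpace.inner_single_left,
    div_eq_inv_mul]

theorem inner_normalFrame_some (j : {j : Fin D // j ∉ range ι})
    (x : EuclideanSpace ℝ (Fin D)) :
    inner ℝ (normalFrame ι (some j)) x = x j := by
  simp [normalFrame, EuclideanSpace.inner_single_left]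

variable {ι}

theorem normalFrame_none_apply_of_notMem {j : Fin D} (hj : j ∉ range ι) :
    normalFrame ι none j = 0 := by
  have : ∀ a, ι a ≠ j := fun a h => hj ⟨a, h⟩
  simp [normalFrame, this]

theorem normalFrame_none_apply (hι : Injective ι) (a : Fin d) :
    normalFrame ι none (ι a) = (√d)⁻¹ := by
  simp [normalFrame, Pi.single_apply, hι.eq_iff]

theorem orthonormal_normalFrame (hd : 0 < d) (hι : Injective ι) :
    Orthonormal ℝ (normalFrame ι) := by
  rw [orthonormal_iff_ite]
  rintro (_ | i) (_ | j)
  · have : (0 : ℝ) < √d := by positivity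
    simp only [inner_normalFrame_none, normalFrame_none_apply hι, Finset.sum_const,
      Finset.card_univ, Fintype.card_fin, nsmul_eq_mul]
    field_simp
    simp [sq_sqrt (Nat.cast_nonneg d)]
  · have : ∀ a, ι a ≠ j := fun a h => j.2 ⟨a, h⟩
    rw [inner_normalFrame_none]
    simp [normalFrame, this]
  · simp [inner_normalFrame_some, normalFrame_none_apply_of_notMem i.2]
  · rw [inner_normalFrame_some]
    simp [normalFrame, Subtype.ext_iff]

theorem finrank_span_normalFrame (hd : 0 < d) (hι : Injective ι) :
    finrank ℝ (Submodule.span ℝ (range (normalFrame ι))) = D - d + 1 := by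
  rw [finrank_span_eq_card (orthonormal_normalFrame hd hι).linearIndependent,
    Fintype.card_option, Fintype.card_subtype_compl, Fintype.card_fin,
    ← Fintype.card_congr (Equiv.ofInjective ι hι), Fintype.card_fin]

theorem finrank_centeredSlice (hd : 0 < d) (hι : Injective ι) (hdD : d ≤ D) :
    finrank ℝ (centeredSlice ι) = d - 1 := by
  have := (Submodule.span ℝ (range (normalFrame ι))).finrank_add_finrank_orthogonal
  rw [finrank_span_normalFrame hd hι, finrank_euclideanSpace_fin] at this
  rw [centeredSlice]
  omega

theorem finrank_orthogonal_centeredSlice (hd : 0 < d) (hι : Injective ι) :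
    finrank ℝ (centeredSlice ι)ᗮ = D - d + 1 := by
  rw [centeredSlice, Submodule.orthogonal_orthogonal, finrank_span_normalFrame hd hι]

theorem norm_orthogonalProjectionOnto_centeredSlice (hd : 0 < d) (hι : Injective ι)
    (x : EuclideanSpace ℝ (Fin D)) :
    ‖(centeredSlice ι).orthogonalProjectionOnto x‖ =
      SensTF.enorm (fun a => x (ι a) - (∑ b, x (ι b)) / d) := by
  have hnormal := (orthonormal_normalFrame hd hι).norm_sq_orthogonalProjectionOnto_span x
  rw [Fintype.sum_option, inner_normalFrame_none, div_pow, sq_sqrt (Nat.cast_nonneg d)] at hnormal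
  simp only [inner_normalFrame_some] at hnormal
  have hx : ‖x‖ ^ 2 = ∑ a, x (ι a) ^ 2 + ∑ j : {j // j ∉ range ι}, x j ^ 2 := by
    rw [EuclideanSpace.real_norm_sq_eq,
      ← Fintype.sum_subtype_add_sum_subtype (· ∈ range ι) (fun j => x j ^ 2)]
    congr 1
    convert (Fintype.sum_equiv (Equiv.ofInjective ι hι) (fun a => x (ι a) ^ 2)
      (fun j => x j ^ 2) fun _ => rfl).symm
  have hmean := sum_sub_mean_sq fun a => x (ι a)
  rw [Fintype.card_fin] at hmean
  rw [SensTF.enorm, hmean, ← sqrt_sq (norm_nonneg _)]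
  congr 1
  have := (Submodule.span ℝ (range (normalFrame ι))).norm_sq_eq_add_norm_sq_projection x
  unfold centeredSlice
  linarith

end CenteredSlice

/-- For `a = k / 2` and `b = l / 2` this is `ε ^ k V_k V_l / V_(k+l)`, where `V_n` is the volume
of the unit `n`-ball and `ε ^ 2 = (k + 1) / (4 (k + l))`. -/
def cylinderRatio (a b : ℝ) : ℝ :=
  ((2 * a + 1) / (8 * (a + b))) ^ a * (Gamma (a + b + 1) / (Gamma (a + 1) * Gamma (b + 1)))

theorem sqrt_pow_mul_Gamma_ratio_eq_cylinderRatio (k l : ℕ) :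
    (1 / 2 * √((k + 1) / (k + l))) ^ k *
        (Gamma ((k + l) / 2 + 1) / (Gamma (k / 2 + 1) * Gamma (l / 2 + 1))) =
      cylinderRatio (k / 2) (l / 2) := by
  have hsqrt :
      1 / 2 * √((k + 1) / (k + l)) = ((k + 1) / (4 * (k + l)) : ℝ) ^ (1 / 2 : ℝ) := by
    rw [← sqrt_eq_rpow, show ((k + 1) / (4 * (k + l)) : ℝ) = (k + 1) / (k + l) / 2 ^ 2 by
        rw [div_div]; ring_nf,
      sqrt_div' ((k + 1) / (k + l) : ℝ) (by norm_num : (0 : ℝ) ≤ 2 ^ 2),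
      sqrt_sq (by norm_num)]
    ring
  rw [cylinderRatio, hsqrt, ← rpow_natCast, ← rpow_mul (by positivity)]
  congr 2
  · ring
  · ring
  · ring_nf

theorem cylinderRatio_half_le {b : ℝ} (hb : 1 / 2 ≤ b) :
    cylinderRatio (1 / 2) b ≤ √(1 / 2) := by
  have hΓ := Gamma_add_half_le_sqrt_mul_Gamma (by linarith : 0 < b + 1)
  have hΓ0 := Gamma_pos_of_pos (by linarith : 0 < b + 1)
  have hΓ1 := Gamma_pos_of_pos (by linarith : 0 < b + 1 + 1 / 2)
  have hΓhalf : Gamma (1 / 2 + 1) = √π / 2 := by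
    rw [Gamma_add_one (by norm_num), Gamma_one_half_eq]; ring
  have hG : cylinderRatio (1 / 2) b =
      √(1 / (4 * (b + 1 / 2))) * (Gamma (b + 1 + 1 / 2) / (√π / 2 * Gamma (b + 1))) := by
    rw [cylinderRatio, ← sqrt_eq_rpow, hΓhalf, show 1 / 2 + b + 1 = b + 1 + 1 / 2 by ring]
    congr 2
    field_simp
    ring
  rw [hG, le_sqrt (by positivity) (by norm_num), mul_pow, sq_sqrt (by positivity), div_pow,
    mul_pow, div_pow, sq_sqrt pi_pos.le]
  calc 1 / (4 * (b + 1 / 2)) * (Gamma (b + 1 + 1 / 2) ^ 2 / (π / 2 ^ 2 * Gamma (b + 1) ^ 2))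
      ≤ 1 / (4 * (b + 1 / 2)) *
          ((b + 1) * Gamma (b + 1) ^ 2 / (π / 2 ^ 2 * Gamma (b + 1) ^ 2)) := by
        gcongr
        calc Gamma (b + 1 + 1 / 2) ^ 2 ≤ (√(b + 1) * Gamma (b + 1)) ^ 2 := by gcongr
          _ = (b + 1) * Gamma (b + 1) ^ 2 := by rw [mul_pow, sq_sqrt (by linarith)]
    _ = (b + 1) / ((b + 1 / 2) * π) := by
        field_simp
        ring
    _ ≤ 1 / 2 := by
        rw [div_le_iff₀ (by positivity)]
        nlinarith [pi_gt_three]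

theorem cylinderRatio_one {b : ℝ} (hb : 0 < b + 1) : cylinderRatio 1 b = 3 / 8 := by
  have := (Gamma_pos_of_pos hb).ne'
  have : 1 + b ≠ 0 := by linarith
  rw [cylinderRatio, rpow_one, show 1 + b + 1 = (b + 1) + 1 by ring, Gamma_add_one hb.ne',
    one_add_one_eq_two, Gamma_two]
  field_simp
  ring

theorem cylinderRatio_add_one_le {a b : ℝ} (ha : 1 / 2 ≤ a) (hb : 0 ≤ b) :
    cylinderRatio (a + 1) b ≤ exp 1 / 3 * cylinderRatio a b := by
  set x := (2 * a + 1) / (8 * (a + b)) with hx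
  set x' := (2 * (a + 1) + 1) / (8 * (a + 1 + b)) with hx'
  set B := Gamma (a + b + 1) / (Gamma (a + 1) * Gamma (b + 1)) with hBdef
  have hΓa := Gamma_pos_of_pos (by linarith : 0 < a + 1)
  have hΓb := Gamma_pos_of_pos (by linarith : 0 < b + 1)
  have hΓab := Gamma_pos_of_pos (by linarith : 0 < a + b + 1)
  have hB : Gamma (a + 1 + b + 1) / (Gamma (a + 1 + 1) * Gamma (b + 1)) =
      (a + b + 1) / (a + 1) * B := by
    rw [show a + 1 + b + 1 = a + b + 1 + 1 by ring, Gamma_add_one (s := a + b + 1) (by linarith),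
      Gamma_add_one (s := a + 1) (by linarith), hBdef]
    field_simp
  have hx'x : x' ≤ x * exp (2 / (2 * a + 1)) := by
    calc x' ≤ (2 * a + 3) / (8 * (a + b)) := by
          rw [hx', show 2 * (a + 1) + 1 = 2 * a + 3 by ring]
          gcongr; linarith
      _ = x * (2 / (2 * a + 1) + 1) := by
          rw [hx]
          field_simp
          ring
      _ ≤ x * exp (2 / (2 * a + 1)) := by gcongr; exact add_one_le_exp _
  have hpow : x' ^ a ≤ exp 1 * x ^ a :=
    calc x' ^ a ≤ (x * exp (2 / (2 * a + 1))) ^ a := by gcongr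
      _ = x ^ a * exp (2 / (2 * a + 1) * a) := by
          rw [mul_rpow (by positivity) (exp_pos _).le, ← exp_mul]
      _ ≤ x ^ a * exp 1 := by
          gcongr
          rw [div_mul_eq_mul_div, div_le_one (by linarith)]
          linarith
      _ = exp 1 * x ^ a := mul_comm _ _
  have hlin : x' * ((a + b + 1) / (a + 1)) ≤ 1 / 3 := by
    rw [show x' * ((a + b + 1) / (a + 1)) = (2 * a + 3) / (8 * (a + 1)) by
      rw [hx']
      field_simp
      ring]
    rw [div_le_div_iff₀ (by linarith) (by norm_num)]
    linarith
  calc cylinderRatio (a + 1) b = x' ^ a * (x' * ((a + b + 1) / (a + 1))) * B := by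
        rw [cylinderRatio, rpow_add_one (by positivity), hB]
        ring
    _ ≤ exp 1 * x ^ a * (1 / 3) * B := by gcongr
    _ = exp 1 / 3 * cylinderRatio a b := by
        rw [cylinderRatio]
        ring

theorem exp_one_div_three_le : exp 1 / 3 ≤ exp (-(2 / 50)) := by
  have h1 : exp (1 / 25) ≤ 1 / (1 - 1 / 25) :=
    exp_bound_div_one_sub_of_interval (by norm_num) (by norm_num)
  have h2 := exp_one_lt_d9
  have h3 : exp (-(2 / 50)) * exp (1 / 25) = 1 := by rw [← exp_add]; norm_num
  nlinarith [exp_pos (1 / 25), exp_pos 1]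

theorem cylinderRatio_le {b : ℝ} (hb : 1 / 2 ≤ b) :
    ∀ k : ℕ, 1 ≤ k → cylinderRatio (k / 2) b ≤ exp (-((k + 1) / 50))
  | 1, _ => by
    have h1 : √(1 / 2) ≤ 24 / 25 := by rw [sqrt_le_left (by norm_num)]; norm_num
    have h2 := add_one_le_exp (-(2 / 50))
    norm_num at h2 ⊢
    linarith [cylinderRatio_half_le hb]
  | 2, _ => by
    have := add_one_le_exp (-(3 / 50))
    norm_num [cylinderRatio_one (by linarith : 0 < b + 1)] at this ⊢
    linarith
  | k + 3, _ => by
    have ih := cylinderRatio_le hb (k + 1) (by omega)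
    have hk : (((k + 3 : ℕ) : ℝ)) / 2 = ((k + 1 : ℕ) : ℝ) / 2 + 1 := by push_cast; ring
    rw [hk]
    calc cylinderRatio (((k + 1 : ℕ) : ℝ) / 2 + 1) b
        ≤ exp 1 / 3 * cylinderRatio (((k + 1 : ℕ) : ℝ) / 2) b :=
          cylinderRatio_add_one_le (by push_cast; linarith [(k.cast_nonneg : (0 : ℝ) ≤ k)])
            (by linarith)
      _ ≤ exp 1 / 3 * exp (-((((k + 1 : ℕ) : ℝ) + 1) / 50)) := by gcongr
      _ ≤ exp (-(2 / 50)) * exp (-((((k + 1 : ℕ) : ℝ) + 1) / 50)) := by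
          gcongr
          exact exp_one_div_three_le
      _ = exp (-((((k + 3 : ℕ) : ℝ) + 1) / 50)) := by
          rw [← exp_add]
          push_cast
          ring_nf

end SensTF

/-- concentration for centered coordinate-restrictions of a random sphere
point. There is an absolute constant `c > 0` such that for all `D ≥ d ≥ 2` and `ρ > 0`:
if `Δ = ρ • v` with `v` uniform on the unit sphere of `ℝ^D` and `Δ′` is the restriction of
`Δ` to `d` fixed coordinates, then
`P(‖Δ′ − mean(Δ′)·𝟙_d‖₂ ≤ (ρ/2)·√(d/D)) ≤ exp(−c·d)`. -/
theorem statement19 :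
    ∃ c > (0 : ℝ), ∀ D d : ℕ, 2 ≤ d → d ≤ D → ∀ ρ : ℝ, 0 < ρ →
      ∀ ι : Fin d → Fin D, Function.Injective ι →
        unifSphere (Fin D)
          {v : Metric.sphere (0 : EuclideanSpace ℝ (Fin D)) 1 |
            SensTF.enorm (fun a : Fin d =>
                (ρ • (v : EuclideanSpace ℝ (Fin D))) (ι a) -
                  (∑ b : Fin d, (ρ • (v : EuclideanSpace ℝ (Fin D))) (ι b)) / d) ≤
              (ρ / 2) * Real.sqrt (d / D)} ≤
          ENNReal.ofReal (Real.exp (-(c * d))) := by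
  refine ⟨1 / 50, by norm_num, fun D d hd hdD ρ hρ ι hι => ?_⟩
  obtain ⟨k, rfl⟩ : ∃ k, d = k + 1 := ⟨d - 1, by omega⟩
  obtain ⟨l, rfl⟩ : ∃ l, D = k + l := ⟨D - k, by omega⟩
  set K := centeredSlice ι
  have hK : finrank ℝ K = k := finrank_centeredSlice (by omega) hι hdD
  have hKperp : finrank ℝ Kᗮ = l := by
    rw [finrank_orthogonal_centeredSlice (by omega) hι]
    omega
  have : Nontrivial K := Module.nontrivial_of_finrank_pos (R := ℝ) (by omega)
  have : Nontrivial Kᗮ := Module.nontrivial_of_finrank_pos (R := ℝ) (by omega)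
  have : Nonempty (Fin (k + l)) := ⟨⟨0, by omega⟩⟩
  set ε : ℝ := 1 / 2 * √((k + 1) / (k + l))
  calc _ = unifSphere (Fin (k + l)) {v | ‖K.orthogonalProjectionOnto v‖ ≤ ε} := by
        congr 1
        ext v
        rw [mem_ofPred_eq, mem_ofPred_eq,
          ← norm_orthogonalProjectionOnto_centeredSlice (by omega) hι, map_smul, norm_smul,
          norm_of_nonneg hρ.le, show ρ / 2 * √_ = ρ * ε by push_cast; ring,
          mul_le_mul_iff_right₀ hρ]
    _ ≤ _ := unifSphere_setOf_norm_orthogonalProjectionOnto_le K ε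
    _ = ENNReal.ofReal (cylinderRatio (k / 2) (l / 2)) := by
        rw [K.volume_closedBall_mul_div_volume_ball (by positivity), hK, hKperp,
          finrank_euclideanSpace_fin, ← sqrt_pow_mul_Gamma_ratio_eq_cylinderRatio]
        push_cast
        rfl
    _ ≤ _ := by
        refine ENNReal.ofReal_le_ofReal ((cylinderRatio_le ?_ k (by omega)).trans_eq ?_)
        · have : (1 : ℝ) ≤ l := mod_cast (show 1 ≤ l by omega)
          linarith
        · push_cast
          ring_nf
end
end
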